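/- In the braid group B_5, let γ = [1,2,2,3,2,2,3,4,3,2,1,2,3,2,4,4,3,3,2,1,3,3,3,2,2,3,4,3,2,2,1,2,2,3,2,3] (the braid word for o9_40582) and α = [2,-3,-2,-1,-3,-3,-2]. Then α⁻¹·γ·α = [(1,2,3,4)^5, (1,2,3)^4, 2,1,3,3,4,-3]. -/

import Mathlib

/-- The Artin braid relations on `n` generators (so this presents the braid
group on `n + 1` strands); generator `i : Fin n` corresponds to `σ_{i+1}`. -/
def braidRels (n : ℕ) : Set (FreeGroup (Fin n)) :=
  { r | (∃ i j : Fin n, (i : ℕ) + 1 = j ∧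
          r = FreeGroup.of i * FreeGroup.of j * FreeGroup.of i *
              (FreeGroup.of j * FreeGroup.of i * FreeGroup.of j)⁻¹) ∨
        (∃ i j : Fin n, (i : ℕ) + 2 ≤ (j : ℕ) ∧
          r = FreeGroup.of i * FreeGroup.of j * (FreeGroup.of j * FreeGroup.of i)⁻¹) }

/-- The braid group on `n + 1` strands, with `n` Artin generators. -/
def BraidGroup (n : ℕ) : Type := PresentedGroup (braidRels n)

instance (n : ℕ) : Group (BraidGroup n) :=
  inferInstanceAs (Group (PresentedGroup (braidRels n)))

/-- The Artin generator `σ_{i+1}` of the braid group on `n + 1` strands. -/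
def braidGen {n : ℕ} (i : Fin n) : BraidGroup n := PresentedGroup.of i

/-- The letter of a braid word: a nonzero integer `a` denotes
`σ_{|a|}^{sign a}`. (Out-of-range letters give `1`.) -/
noncomputable def braidLetter (n : ℕ) (a : ℤ) : BraidGroup n :=
  if h : a.natAbs - 1 < n then
    (braidGen (⟨a.natAbs - 1, h⟩ : Fin n)) ^ (if 0 < a then (1 : ℤ) else -1)
  else 1

/-- The element of the braid group represented by a braid word. -/
noncomputable def braidWord (n : ℕ) (w : List ℤ) : BraidGroup n :=
  (w.map (braidLetter n)).prod

/-!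
The identity is a computation in the word problem of `B₅`: an explicit list of elementary moves
(inserting or cancelling a pair `σᵢ⁻¹ σᵢ`, commuting distant generators, applying a braid
relation) rewrites `α⁻¹ γ α R⁻¹`, with `R` the right-hand side, to the empty word. Every move
preserves the braid represented by the word, and the rewriting is checked by evaluation.
-/

section Words

variable {n : ℕ}

theorem braidGen_braid {i j : Fin n} (h : (i : ℕ) + 1 = j) :
    braidGen i * braidGen j * braidGen i = braidGen j * braidGen i * braidGen j :=
  PresentedGroup.mk_eq_mk_of_mul_inv_mem (Or.inl ⟨i, j, h, rfl⟩)

theorem commute_braidGen {i j : Fin n} (h : (i : ℕ) + 2 ≤ j) :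
    Commute (braidGen i) (braidGen j) :=
  PresentedGroup.mk_eq_mk_of_mul_inv_mem (Or.inr ⟨i, j, h, rfl⟩)

theorem braidGen_zpow_braid {i j : Fin n} (h : (i : ℕ) + 1 = j) {e : ℤ} (he : e = 1 ∨ e = -1) :
    braidGen i ^ e * braidGen j ^ e * braidGen i ^ e =
      braidGen j ^ e * braidGen i ^ e * braidGen j ^ e := by
  rcases he with rfl | rfl
  · simpa using braidGen_braid h
  · simpa [mul_assoc] using congrArg (·⁻¹) (braidGen_braid h)

@[simp]
theorem braidWord_nil : braidWord n [] = 1 := rfl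

@[simp]
theorem braidWord_cons (a : ℤ) (w : List ℤ) :
    braidWord n (a :: w) = braidLetter n a * braidWord n w :=
  List.prod_cons

@[simp]
theorem braidWord_append (u v : List ℤ) :
    braidWord n (u ++ v) = braidWord n u * braidWord n v := by
  simp [braidWord]

theorem braidLetter_eq_zpow_sign {a : ℤ} (ha : a ≠ 0) (han : a.natAbs ≤ n) :
    braidLetter n a = braidGen ⟨a.natAbs - 1, by omega⟩ ^ a.sign := by
  rcases ha.lt_or_gt with h | h <;> simp [braidLetter, h, Int.sign_eq_neg_one_of_neg,
    Int.sign_eq_one_of_pos, not_lt.mpr h.le, show a.natAbs - 1 < n by omega]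

theorem braidLetter_neg {a : ℤ} (ha : a ≠ 0) : braidLetter n (-a) = (braidLetter n a)⁻¹ := by
  by_cases han : a.natAbs ≤ n
  · rw [braidLetter_eq_zpow_sign (neg_ne_zero.mpr ha) (by simpa using han),
      braidLetter_eq_zpow_sign ha han]
    simp
  · simp [braidLetter, show ¬a.natAbs - 1 < n by omega]

theorem commute_braidLetter {a b : ℤ} (ha : a ≠ 0) (hb : b ≠ 0) (han : a.natAbs ≤ n)
    (hbn : b.natAbs ≤ n) (hab : a.natAbs + 2 ≤ b.natAbs ∨ b.natAbs + 2 ≤ a.natAbs) :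
    Commute (braidLetter n a) (braidLetter n b) := by
  rw [braidLetter_eq_zpow_sign ha han, braidLetter_eq_zpow_sign hb hbn]
  refine Commute.zpow_zpow ?_ _ _
  rcases hab with hab | hab
  · exact commute_braidGen (by simp only; omega)
  · exact (commute_braidGen (by simp only; omega)).symm

theorem braidLetter_braid {a b : ℤ} (ha : a ≠ 0) (hb : b ≠ 0)
    (han : a.natAbs ≤ n) (hbn : b.natAbs ≤ n)
    (hab : a.natAbs + 1 = b.natAbs ∨ b.natAbs + 1 = a.natAbs) (hsign : a.sign = b.sign) :
    braidLetter n a * braidLetter n b * braidLetter n a =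
      braidLetter n b * braidLetter n a * braidLetter n b := by
  rw [braidLetter_eq_zpow_sign ha han, braidLetter_eq_zpow_sign hb hbn, ← hsign]
  have hsign_unit : a.sign = 1 ∨ a.sign = -1 := by
    rcases ha.lt_or_gt with h | h <;> simp [h, Int.sign_eq_neg_one_of_neg, Int.sign_eq_one_of_pos]
  rcases hab with hab | hab
  · exact braidGen_zpow_braid (by simp only; omega) hsign_unit
  · exact (braidGen_zpow_braid (by simp only; omega) hsign_unit).symm

def invRev (w : List ℤ) : List ℤ := (w.map Neg.neg).reverse

theorem braidWord_invRev {w : List ℤ} (hw : ∀ a ∈ w, a ≠ 0) :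
    braidWord n (invRev w) = (braidWord n w)⁻¹ := by
  induction w with
  | nil => simp [invRev]
  | cons a w ih =>
    simp only [List.forall_mem_cons] at hw
    simp [invRev, ← ih hw.2, braidLetter_neg hw.1]

end Words

inductive BraidMove
  | insertPair (a : ℤ)
  | cancelPair
  | swap
  | braid

namespace BraidMove

def rewrite (n : ℕ) : BraidMove → List ℤ → Option (List ℤ)
  | insertPair a, w => if a ≠ 0 then some (-a :: a :: w) else none
  | cancelPair, a :: b :: w => if a ≠ 0 ∧ b = -a then some w else none
  | swap, a :: b :: w =>
    if a ≠ 0 ∧ b ≠ 0 ∧ a.natAbs ≤ n ∧ b.natAbs ≤ n ∧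
        (a.natAbs + 2 ≤ b.natAbs ∨ b.natAbs + 2 ≤ a.natAbs) then
      some (b :: a :: w)
    else none
  | braid, a :: b :: c :: w =>
    if c = a ∧ a ≠ 0 ∧ b ≠ 0 ∧ a.natAbs ≤ n ∧ b.natAbs ≤ n ∧
        (a.natAbs + 1 = b.natAbs ∨ b.natAbs + 1 = a.natAbs) ∧ a.sign = b.sign then
      some (b :: a :: b :: w)
    else none
  | _, _ => none

theorem braidWord_eq_of_rewrite {n : ℕ} {m : BraidMove} {w w' : List ℤ}
    (h : m.rewrite n w = some w') : braidWord n w = braidWord n w' := by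
  match m, w with
  | insertPair a, w =>
    simp only [rewrite, ite_not, Option.ite_none_left_eq_some, Option.some.injEq] at h
    obtain ⟨ha, rfl⟩ := h
    simp [braidLetter_neg ha]
  | cancelPair, a :: b :: w =>
    simp only [rewrite, Option.ite_none_right_eq_some, Option.some.injEq] at h
    obtain ⟨⟨ha, rfl⟩, rfl⟩ := h
    simp [braidLetter_neg ha]
  | swap, a :: b :: w =>
    simp only [rewrite, Option.ite_none_right_eq_some, Option.some.injEq] at h
    obtain ⟨⟨ha, hb, han, hbn, hab⟩, rfl⟩ := h
    simp only [braidWord_cons, ← mul_assoc, (commute_braidLetter ha hb han hbn hab).eq]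
  | braid, a :: b :: c :: w =>
    simp only [rewrite, Option.ite_none_right_eq_some, Option.some.injEq] at h
    obtain ⟨⟨rfl, ha, hb, han, hbn, hab, hsign⟩, rfl⟩ := h
    simp only [braidWord_cons, ← mul_assoc, braidLetter_braid ha hb han hbn hab hsign]
  | cancelPair, [] | cancelPair, [_] | swap, [] | swap, [_]
  | braid, [] | braid, [_] | braid, [_, _] => simp [rewrite] at h

end BraidMove

def rewriteAt (n : ℕ) (w : List ℤ) : ℕ × BraidMove → Option (List ℤ)
  | (p, m) => (m.rewrite n (w.drop p)).map (w.take p ++ ·)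

theorem braidWord_eq_of_rewriteAt {n : ℕ} {w w' : List ℤ} {pm : ℕ × BraidMove}
    (h : rewriteAt n w pm = some w') : braidWord n w = braidWord n w' := by
  obtain ⟨p, m⟩ := pm
  obtain ⟨v, hv, rfl⟩ := Option.map_eq_some_iff.mp h
  rw [← List.take_append_drop p w, braidWord_append, braidWord_append,
    BraidMove.braidWord_eq_of_rewrite hv, List.take_append_drop]

theorem braidWord_eq_of_foldlM_rewriteAt {n : ℕ} {ms : List (ℕ × BraidMove)} {w w' : List ℤ}
    (h : ms.foldlM (rewriteAt n) w = some w') : braidWord n w = braidWord n w' := by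
  induction ms generalizing w with
  | nil =>
    obtain rfl : w = w' := Option.some.inj h
    rfl
  | cons pm ms ih =>
    obtain ⟨v, hv, hrest⟩ := Option.bind_eq_some_iff.mp h
    exact (braidWord_eq_of_rewriteAt hv).trans (ih hrest)

theorem inv_mul_mul_eq_of_foldlM_rewriteAt {n : ℕ} {u g v : List ℤ} {ms : List (ℕ × BraidMove)}
    (hu : ∀ a ∈ u, a ≠ 0) (hv : ∀ a ∈ v, a ≠ 0)
    (h : ms.foldlM (rewriteAt n) (invRev u ++ g ++ u ++ invRev v) = some []) :
    (braidWord n u)⁻¹ * braidWord n g * braidWord n u = braidWord n v := by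
  have h₁ := braidWord_eq_of_foldlM_rewriteAt h
  rwa [braidWord_append, braidWord_append, braidWord_append, braidWord_invRev hu,
    braidWord_invRev hv, braidWord_nil, mul_inv_eq_one] at h₁

def conjugationMoves : List (ℕ × BraidMove) :=
  [(4, .insertPair 3), (5, .braid), (7, .cancelPair), (2, .swap), (3, .cancelPair),
    (40, .insertPair 2), (41, .braid), (43, .cancelPair), (39, .cancelPair), (40, .cancelPair),
    (35, .insertPair 2), (36, .braid), (38, .insertPair 2), (39, .braid), (41, .swap), (42, .swap),
    (43, .cancelPair), (34, .cancelPair), (35, .cancelPair), (38, .cancelPair), (37, .cancelPair),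
    (36, .cancelPair), (31, .insertPair 3), (32, .braid), (34, .swap), (35, .swap), (36, .swap),
    (37, .insertPair 3), (38, .braid), (40, .cancelPair), (30, .cancelPair), (37, .cancelPair),
    (31, .insertPair 2), (32, .braid), (34, .swap), (35, .swap), (36, .cancelPair), (29, .swap),
    (30, .cancelPair), (30, .insertPair 2), (31, .braid), (33, .swap), (34, .swap),
    (35, .insertPair 4), (36, .braid), (38, .cancelPair), (28, .swap), (29, .cancelPair),
    (28, .insertPair 3), (29, .braid), (31, .swap), (32, .swap), (33, .swap), (34, .cancelPair),
    (27, .cancelPair), (31, .swap), (32, .swap), (33, .cancelPair), (29, .insertPair 1),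
    (30, .braid), (32, .insertPair 3), (33, .braid), (35, .swap), (36, .cancelPair), (24, .swap),
    (25, .swap), (26, .swap), (27, .swap), (28, .cancelPair), (27, .insertPair 2), (28, .braid),
    (30, .swap), (31, .cancelPair), (23, .insertPair 3), (24, .braid), (26, .insertPair 3),
    (27, .braid), (29, .swap), (30, .cancelPair), (22, .cancelPair), (23, .cancelPair),
    (30, .insertPair 4), (31, .braid), (33, .cancelPair), (25, .insertPair 3), (26, .braid),
    (28, .swap), (29, .swap), (30, .swap), (31, .cancelPair), (24, .cancelPair), (28, .insertPair 3),
    (29, .braid), (31, .swap), (32, .cancelPair), (25, .insertPair 2), (26, .braid), (28, .swap),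
    (29, .cancelPair), (23, .swap), (24, .cancelPair), (26, .insertPair 2), (27, .braid),
    (29, .swap), (30, .swap), (31, .cancelPair), (25, .cancelPair), (27, .insertPair 4),
    (28, .braid), (30, .cancelPair), (23, .insertPair 3), (24, .braid), (26, .swap), (27, .swap),
    (28, .cancelPair), (21, .insertPair 2), (22, .braid), (24, .cancelPair), (18, .swap),
    (19, .swap), (20, .cancelPair), (25, .insertPair 3), (26, .braid), (28, .swap),
    (29, .cancelPair), (23, .swap), (24, .cancelPair), (23, .insertPair 2), (24, .braid),
    (26, .swap), (27, .swap), (28, .cancelPair), (21, .swap), (22, .cancelPair), (24, .insertPair 4),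
    (25, .braid), (27, .cancelPair), (21, .swap), (22, .swap), (23, .cancelPair),
    (22, .insertPair 3), (23, .braid), (25, .swap), (26, .cancelPair), (20, .swap),
    (21, .cancelPair), (20, .insertPair 2), (21, .braid), (23, .swap), (24, .swap),
    (25, .cancelPair), (16, .insertPair 3), (17, .braid), (19, .swap), (20, .swap),
    (21, .cancelPair), (13, .insertPair 2), (14, .braid), (16, .swap), (17, .cancelPair),
    (10, .insertPair 3), (11, .braid), (13, .swap), (14, .cancelPair), (8, .insertPair 2),
    (9, .braid), (11, .cancelPair), (7, .cancelPair), (21, .insertPair 4), (22, .braid),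
    (24, .cancelPair), (18, .swap), (19, .swap), (20, .cancelPair), (19, .insertPair 3),
    (20, .braid), (22, .swap), (23, .cancelPair), (16, .insertPair 4), (17, .braid), (19, .swap),
    (20, .cancelPair), (11, .insertPair 3), (12, .braid), (14, .swap), (15, .swap), (16, .swap),
    (17, .cancelPair), (10, .cancelPair), (17, .insertPair 2), (18, .braid), (20, .swap),
    (21, .swap), (22, .cancelPair), (21, .cancelPair), (20, .cancelPair), (19, .cancelPair),
    (18, .cancelPair), (14, .insertPair 3), (15, .braid), (17, .swap), (18, .cancelPair),
    (17, .cancelPair), (16, .cancelPair), (15, .cancelPair), (11, .insertPair 2), (12, .braid),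
    (14, .swap), (15, .cancelPair), (14, .cancelPair), (9, .swap), (10, .cancelPair),
    (9, .insertPair 3), (10, .braid), (12, .swap), (13, .cancelPair), (7, .insertPair 2),
    (8, .braid), (10, .cancelPair), (6, .cancelPair), (9, .insertPair 2), (10, .braid),
    (12, .cancelPair), (11, .cancelPair), (7, .swap), (8, .cancelPair), (5, .swap), (6, .swap),
    (7, .swap), (8, .cancelPair), (6, .insertPair 3), (7, .braid), (9, .cancelPair),
    (5, .cancelPair), (6, .cancelPair), (3, .insertPair 3), (4, .braid), (6, .swap),
    (7, .cancelPair), (1, .swap), (2, .cancelPair), (1, .insertPair 2), (2, .braid), (4, .swap),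
    (5, .swap), (6, .cancelPair), (0, .cancelPair), (3, .cancelPair), (2, .cancelPair),
    (1, .cancelPair), (0, .cancelPair)]

theorem stmt17
    (γ α : BraidGroup 4)
    (hγ : γ = braidWord 4
      [1, 2, 2, 3, 2, 2, 3, 4, 3, 2, 1, 2, 3, 2, 4, 4, 3, 3, 2, 1, 3, 3, 3, 2, 2, 3, 4, 3, 2,
      2, 1, 2, 2, 3, 2, 3])
    (hα : α = braidWord 4
      [2, -3, -2, -1, -3, -3, -2]) :
    α⁻¹ * γ * α = braidWord 4
      [1, 2, 3, 4, 1, 2, 3, 4, 1, 2, 3, 4, 1, 2, 3, 4, 1, 2, 3, 4, 1, 2, 3, 1, 2, 3, 1, 2, 3,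
      1, 2, 3, 2, 1, 3, 3, 4, -3] := by
  subst hγ hα
  exact inv_mul_mul_eq_of_foldlM_rewriteAt (ms := conjugationMoves) (by decide) (by decide)
    (by decide +kernel)
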